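/- Define operators on L¹([0,1]) by P_α u(x) = (1/2)u(2x) for x ∈ [0,1/2), P_α u(x) = (1/2)u(2x-1) for x ∈ [1/2,1], and P_β u(x) = (1/4)u(x/2) + (1/4)u((x+1)/2). Let P₀ = P_α + P_β. Then for the Haar subspaces H_ℓ (the span of {χ_{ℓ,k} : 0 ≤ k < 2^{ℓ-1}}), one has P_α(H_ℓ) ⊆ H_{ℓ+1} for all ℓ ≥ 1, P_β(H_{ℓ+1}) ⊆ H_ℓ for all ℓ ≥ 1, and P_β(H_1) = {0}. -/

import Mathlib

/-!
Everything is linear, so it suffices to look at the generators `χ_{ℓ,k}`. Using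
`χ_{ℓ+1,k}(x) = χ_{ℓ,k}(2x)` and `χ_{ℓ,2^{ℓ-1}+k}(x) = χ_{ℓ,k}(x-1)`, together with the fact
that `χ_{ℓ,k}` is supported in `[0,1)` for `k < 2^{ℓ-1}`, one finds
`P_α χ_{ℓ,k} = ½ χ_{ℓ+1,k} + ½ χ_{ℓ+1,2^{ℓ-1}+k}` and, on `[0,1)`,
`P_β χ_{ℓ+1,k} = ¼ χ_{ℓ,k mod 2^{ℓ-1}}`, while
`P_β χ_{1,0} = ¼ (χ(x/2) + χ((x+1)/2)) = ¼ (1 - 1) = 0` on `[0,1)`.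
-/

/-- The Haar mother wavelet: `1` on `[0,1/2)`, `-1` on `[1/2,1)`, `0` elsewhere. -/
noncomputable def haarChi (x : ℝ) : ℝ :=
  if 0 ≤ x ∧ x < 1 / 2 then 1 else if 1 / 2 ≤ x ∧ x < 1 then -1 else 0

/-- The Haar function `χ_{ℓ,k}(x) = χ(2^{ℓ-1} x - k)`. -/
noncomputable def chiLK (ℓ k : ℕ) (x : ℝ) : ℝ := haarChi (2 ^ (ℓ - 1) * x - k)

/-- The level-`ℓ` Haar subspace `H_ℓ`, spanned by `{χ_{ℓ,k} : 0 ≤ k < 2^{ℓ-1}}`. -/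
noncomputable def Hsub (ℓ : ℕ) : Submodule ℝ (ℝ → ℝ) :=
  Submodule.span ℝ {g | ∃ k < 2 ^ (ℓ - 1), g = chiLK ℓ k}

/-- The operator `P_α u(x) = (1/2)u(2x)` on `[0,1/2)`, `(1/2)u(2x-1)` on `[1/2,1]`. -/
noncomputable def Pa (u : ℝ → ℝ) (x : ℝ) : ℝ :=
  if x < 1 / 2 then (1 / 2) * u (2 * x) else (1 / 2) * u (2 * x - 1)

/-- The operator `P_β u(x) = (1/4)u(x/2) + (1/4)u((x+1)/2)`. -/
noncomputable def Pb (u : ℝ → ℝ) (x : ℝ) : ℝ :=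
  (1 / 4) * u (x / 2) + (1 / 4) * u ((x + 1) / 2)

open Set

/-- Restricting to `s` turns the existential into membership in a submodule, to which
`Submodule.span_le` applies. -/
theorem exists_mem_eqOn_of_mem_span {R E M β : Type*} [Semiring R] [AddCommMonoid E] [Module R E]
    [AddCommMonoid M] [Module R M] (T : E →ₗ[R] β → M) (s : Set β) {G : Set E}
    {q : Submodule R (β → M)} (hG : ∀ g ∈ G, ∃ v ∈ q, EqOn (T g) v s) {u : E}
    (hu : u ∈ Submodule.span R G) : ∃ v ∈ q, EqOn (T u) v s := by
  let ρ := LinearMap.funLeft R M ((↑) : s → β)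
  have hspan : Submodule.span R G ≤ (q.map ρ).comap (ρ ∘ₗ T) :=
    Submodule.span_le.2 fun g hg => by
      obtain ⟨v, hv, hgv⟩ := hG g hg
      exact ⟨v, hv, funext fun x => (hgv x.2).symm⟩
  obtain ⟨v, hv, hρ⟩ := hspan hu
  exact ⟨v, hv, fun x hx => (congrFun hρ ⟨x, hx⟩).symm⟩

section HaarFunctions

variable {m k : ℕ} {x : ℝ}

theorem haarChi_eq_one (h₀ : 0 ≤ x) (h₁ : x < 1 / 2) : haarChi x = 1 :=
  if_pos ⟨h₀, h₁⟩

theorem haarChi_eq_neg_one (h₀ : 1 / 2 ≤ x) (h₁ : x < 1) : haarChi x = -1 := by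
  rw [haarChi, if_neg (by intro h; linarith [h.2]), if_pos ⟨h₀, h₁⟩]

theorem haarChi_eq_zero_of_neg (hx : x < 0) : haarChi x = 0 := by
  rw [haarChi, if_neg (by intro h; linarith [h.1]), if_neg (by intro h; linarith [h.1])]

theorem haarChi_eq_zero_of_one_le (hx : 1 ≤ x) : haarChi x = 0 := by
  rw [haarChi, if_neg (by intro h; linarith [h.2]), if_neg (by intro h; linarith [h.2])]

theorem chiLK_succ_succ (m k : ℕ) (x : ℝ) : chiLK (m + 2) k x = chiLK (m + 1) k (2 * x) := by
  simp only [chiLK, Nat.add_sub_cancel, show m + 2 - 1 = m + 1 from rfl, pow_succ, mul_assoc]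

theorem chiLK_succ_two_pow_add (m j : ℕ) (x : ℝ) :
    chiLK (m + 1) (2 ^ m + j) x = chiLK (m + 1) j (x - 1) := by
  simp only [chiLK, Nat.add_sub_cancel, Nat.cast_add, Nat.cast_pow, Nat.cast_ofNat]
  ring_nf

theorem chiLK_eq_zero_of_neg (ℓ k : ℕ) (hx : x < 0) : chiLK ℓ k x = 0 :=
  haarChi_eq_zero_of_neg <| by
    have : (2 : ℝ) ^ (ℓ - 1) * x < 0 := mul_neg_of_pos_of_neg (by positivity) hx
    linarith [k.cast_nonneg (α := ℝ)]

theorem chiLK_succ_eq_zero_of_one_le (hk : k < 2 ^ m) (hx : 1 ≤ x) : chiLK (m + 1) k x = 0 :=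
  haarChi_eq_zero_of_one_le <| by
    have hk' : (k : ℝ) + 1 ≤ 2 ^ m := by exact_mod_cast hk
    have : (2 : ℝ) ^ m ≤ 2 ^ m * x := le_mul_of_one_le_right (by positivity) hx
    simp only [Nat.add_sub_cancel]
    linarith

theorem chiLK_mem_Hsub {ℓ : ℕ} (hk : k < 2 ^ (ℓ - 1)) : chiLK ℓ k ∈ Hsub ℓ :=
  Submodule.subset_span ⟨k, hk, rfl⟩

end HaarFunctions

noncomputable def paLinearMap : (ℝ → ℝ) →ₗ[ℝ] ℝ → ℝ where
  toFun := Pa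
  map_add' u v := funext fun x => by
    simp only [Pa, Pi.add_apply]
    split_ifs <;> ring
  map_smul' c u := funext fun x => by
    simp only [Pa, Pi.smul_apply, smul_eq_mul, RingHom.id_apply]
    split_ifs <;> ring

noncomputable def pbLinearMap : (ℝ → ℝ) →ₗ[ℝ] ℝ → ℝ where
  toFun := Pb
  map_add' u v := funext fun x => by
    simp only [Pb, Pi.add_apply]
    ring
  map_smul' c u := funext fun x => by
    simp only [Pb, Pi.smul_apply, smul_eq_mul, RingHom.id_apply]
    ring

section Transitions

variable {m k j : ℕ} {u : ℝ → ℝ}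

theorem pa_chiLK (hk : k < 2 ^ m) :
    Pa (chiLK (m + 1) k) =
      (1 / 2 : ℝ) • chiLK (m + 2) k + (1 / 2 : ℝ) • chiLK (m + 2) (2 ^ m + k) := by
  funext x
  simp only [Pa, Pi.add_apply, Pi.smul_apply, smul_eq_mul, chiLK_succ_succ, chiLK_succ_two_pow_add]
  split_ifs with hx
  · rw [chiLK_eq_zero_of_neg _ _ (by linarith : 2 * x - 1 < 0)]
    ring
  · rw [chiLK_succ_eq_zero_of_one_le hk (by linarith : 1 ≤ 2 * x)]
    ring

theorem pa_mem_Hsub (hu : u ∈ Hsub (m + 1)) : Pa u ∈ Hsub (m + 2) := by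
  refine (Submodule.span_le.2 ?_ : Hsub (m + 1) ≤ (Hsub (m + 2)).comap paLinearMap) hu
  rintro _ ⟨k, hk, rfl⟩
  rw [Nat.add_sub_cancel] at hk
  have hk₁ : k < 2 ^ (m + 1) := hk.trans (Nat.pow_lt_pow_succ one_lt_two)
  have hk₂ : 2 ^ m + k < 2 ^ (m + 1) := by rw [pow_succ]; omega
  rw [SetLike.mem_coe, Submodule.mem_comap, paLinearMap, LinearMap.coe_mk, AddHom.coe_mk,
    pa_chiLK hk]
  exact add_mem (Submodule.smul_mem _ _ (chiLK_mem_Hsub hk₁))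
    (Submodule.smul_mem _ _ (chiLK_mem_Hsub hk₂))

theorem pb_chiLK_succ_succ (k : ℕ) (x : ℝ) :
    Pb (chiLK (m + 2) k) x = 1 / 4 * chiLK (m + 1) k x + 1 / 4 * chiLK (m + 1) k (x + 1) := by
  simp only [Pb, chiLK_succ_succ, mul_div_cancel₀ _ (two_ne_zero' ℝ)]

theorem pb_chiLK_eqOn_of_lt (hk : k < 2 ^ m) :
    EqOn (Pb (chiLK (m + 2) k)) ((1 / 4 : ℝ) • chiLK (m + 1) k) (Ico 0 1) := by
  rintro x ⟨hx₀, -⟩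
  rw [pb_chiLK_succ_succ, chiLK_succ_eq_zero_of_one_le hk (by linarith : 1 ≤ x + 1),
    Pi.smul_apply, smul_eq_mul]
  ring

theorem pb_chiLK_two_pow_add_eqOn :
    EqOn (Pb (chiLK (m + 2) (2 ^ m + j))) ((1 / 4 : ℝ) • chiLK (m + 1) j) (Ico 0 1) := by
  rintro x ⟨-, hx₁⟩
  rw [pb_chiLK_succ_succ, chiLK_succ_two_pow_add, chiLK_succ_two_pow_add, add_sub_cancel_right,
    chiLK_eq_zero_of_neg _ _ (by linarith), Pi.smul_apply, smul_eq_mul]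
  ring

theorem exists_mem_Hsub_eqOn_pb (hu : u ∈ Hsub (m + 2)) :
    ∃ v ∈ Hsub (m + 1), EqOn (Pb u) v (Ico 0 1) := by
  refine exists_mem_eqOn_of_mem_span pbLinearMap _ (fun g hg => ?_) hu
  obtain ⟨k, hk, rfl⟩ := hg
  rcases lt_or_ge k (2 ^ m) with hk' | hk'
  · exact ⟨_, Submodule.smul_mem _ _ (chiLK_mem_Hsub hk'), pb_chiLK_eqOn_of_lt hk'⟩
  · obtain ⟨j, rfl⟩ := Nat.exists_eq_add_of_le hk'
    have hj : j < 2 ^ m := by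
      rw [show m + 2 - 1 = m + 1 from rfl, pow_succ] at hk
      omega
    exact ⟨_, Submodule.smul_mem _ _ (chiLK_mem_Hsub hj), pb_chiLK_two_pow_add_eqOn⟩

theorem pb_chiLK_one_zero_eqOn : EqOn (Pb (chiLK 1 0)) 0 (Ico 0 1) := by
  rintro x ⟨hx₀, hx₁⟩
  simp only [Pb, chiLK, Nat.sub_self, pow_zero, one_mul, Nat.cast_zero, sub_zero, Pi.zero_apply]
  rw [haarChi_eq_one (by linarith) (by linarith), haarChi_eq_neg_one (by linarith) (by linarith)]
  ring

theorem pb_eqOn_zero_of_mem_Hsub_one (hu : u ∈ Hsub 1) : EqOn (Pb u) 0 (Ico 0 1) := by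
  have hgen : ∀ g ∈ {g | ∃ k < 2 ^ (1 - 1), g = chiLK 1 k},
      ∃ v ∈ (⊥ : Submodule ℝ (ℝ → ℝ)), EqOn (pbLinearMap g) v (Ico 0 1) := by
    rintro _ ⟨k, hk, rfl⟩
    obtain rfl : k = 0 := by simpa using hk
    exact ⟨0, zero_mem _, pb_chiLK_one_zero_eqOn⟩
  obtain ⟨v, hv, huv⟩ := exists_mem_eqOn_of_mem_span pbLinearMap _ hgen hu
  rwa [(Submodule.mem_bot ℝ).1 hv] at huv

end Transitions

/-- As operators on `L¹([0,1])` (functions identified by their values on `[0,1)`):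
`P_α(H_ℓ) ⊆ H_{ℓ+1}` and `P_β(H_{ℓ+1}) ⊆ H_ℓ` for all `ℓ ≥ 1`, and `P_β(H_1) = {0}`. -/
theorem haar_subspace_transitions :
    (∀ ℓ : ℕ, 1 ≤ ℓ → ∀ u ∈ Hsub ℓ,
      ∃ v ∈ Hsub (ℓ + 1), Set.EqOn (Pa u) v (Set.Ico 0 1))
    ∧ (∀ ℓ : ℕ, 1 ≤ ℓ → ∀ u ∈ Hsub (ℓ + 1),
      ∃ v ∈ Hsub ℓ, Set.EqOn (Pb u) v (Set.Ico 0 1))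
    ∧ (∀ u ∈ Hsub 1, ∀ x ∈ Set.Ico (0 : ℝ) 1, Pb u x = 0) := by
  refine ⟨fun ℓ hℓ u hu => ?_, fun ℓ hℓ u hu => ?_,
    fun u hu x hx => pb_eqOn_zero_of_mem_Hsub_one hu hx⟩
  · obtain ⟨m, rfl⟩ := Nat.exists_eq_add_of_le' hℓ
    exact ⟨Pa u, pa_mem_Hsub hu, eqOn_refl _ _⟩
  · obtain ⟨m, rfl⟩ := Nat.exists_eq_add_of_le' hℓ
    exact exists_mem_Hsub_eqOn_pb hu
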